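/- arXiv:2005.10054 — 2 statements merged into one kernel-verified Lean document; each statement's English description precedes it below -/
import Mathlib

section
/- Let (a,p) be a truthful mechanism with finite approximation ratio ρ. If, on cost matrix A1, the mechanism allocates proper task n+1 to machine 1 but does not allocate all of the proper tasks n+2,…,2n−1 to machine 1, then ρ ≥ 1 + a. -/
open scoped ENNReal BigOperators

/-- A feasible allocation of `m` tasks to `n` machines: a 0-1 matrix (represented as a
`Bool`-valued matrix) in which every task is assigned to exactly one machine. -/
structure Alloc (n m : ℕ) where
  assign : Fin n → Fin m → Bool
  feasible : ∀ j : Fin m, ∃! i : Fin n, assign i j = true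

/-- The total processing cost incurred by machine `i` under allocation `A`
when her (true) cost row is `ti`. -/
noncomputable def machineCost {n m : ℕ} (A : Alloc n m) (ti : Fin m → ℝ≥0∞) (i : Fin n) :
    ℝ≥0∞ :=
  ∑ j : Fin m, if A.assign i j then ti j else 0

/-- A deterministic (direct-revelation) mechanism: an allocation rule together with a
payment rule. -/
structure Mechanism (n m : ℕ) where
  alloc : (Fin n → Fin m → ℝ≥0∞) → Alloc n m
  pay : (Fin n → Fin m → ℝ≥0∞) → Fin n → ℝ

/-- The (quasi-linear) utility of machine `i` when the reported cost matrix is `t` and her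
true cost row is `trueRow`: her payment minus her incurred true cost, in the extended reals. -/
noncomputable def utility {n m : ℕ} (M : Mechanism n m) (t : Fin n → Fin m → ℝ≥0∞)
    (trueRow : Fin m → ℝ≥0∞) (i : Fin n) : EReal :=
  (M.pay t i : EReal) - ((machineCost (M.alloc t) trueRow i : ℝ≥0∞) : EReal)

/-- Truthfulness: no machine can strictly increase her utility by misreporting her row,
whatever the (fixed) reports of the other machines are. -/
def Truthful {n m : ℕ} (M : Mechanism n m) : Prop :=
  ∀ (t : Fin n → Fin m → ℝ≥0∞) (i : Fin n) (ti' : Fin m → ℝ≥0∞),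
    utility M (Function.update t i ti') (t i) i ≤ utility M t (t i) i

/-- The makespan of allocation `A` on cost matrix `t`. -/
noncomputable def makespan {n m : ℕ} (A : Alloc n m) (t : Fin n → Fin m → ℝ≥0∞) : ℝ≥0∞ :=
  ⨆ i : Fin n, machineCost A (t i) i

/-- The optimal makespan on cost matrix `t`. -/
noncomputable def optMakespan (n m : ℕ) (t : Fin n → Fin m → ℝ≥0∞) : ℝ≥0∞ :=
  ⨅ A : Alloc n m, makespan A t

/-- The mechanism `M` has approximation ratio (at most) `ρ`. -/
def ApproxRatioLE {n m : ℕ} (M : Mechanism n m) (ρ : ℝ) : Prop :=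
  1 ≤ ρ ∧ ∀ t : Fin n → Fin m → ℝ≥0∞,
    makespan (M.alloc t) t ≤ ENNReal.ofReal ρ * optMakespan n m t

/-- The cost matrix `A0` on `n` machines and `2n-1` tasks. Tasks with index `< n` (0-based)
are the dummy tasks: machine `i` has cost `0` on dummy task `i` and `∞` on the other dummy
tasks. Tasks with index `n, n+1, …, 2n-2` (0-based) are the proper tasks `n+1, …, 2n-1` of
the paper: machines `1` and `2` (indices `0`, `1`) have cost `1` on task `n+1` (index `n`)
and cost `a^{-(j-2)}` on task `n+j` (index `n+j-1`) for `j = 2,…,n-1`; machine `i`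
(index `i-1 ≥ 2`), for `3 ≤ i ≤ n`, has cost `a^{-(i-3)}` on task `n+i-1` (index `n+i-2`)
and `∞` on every other proper task. -/
noncomputable def A0 (n : ℕ) (a : ℝ) : Fin n → Fin (2 * n - 1) → ℝ≥0∞ := fun i j =>
  if (j : ℕ) < n then
    (if (j : ℕ) = (i : ℕ) then 0 else ⊤)
  else if (i : ℕ) ≤ 1 then
    (if (j : ℕ) = n then 1 else ENNReal.ofReal (a⁻¹ ^ ((j : ℕ) - n - 1)))
  else
    (if (j : ℕ) = n + (i : ℕ) - 1 then ENNReal.ofReal (a⁻¹ ^ ((j : ℕ) - n - 1)) else ⊤)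

/-- The cost matrix `A1`: identical to `A0` except for machine `1`'s (index `0`'s) costs on
the proper tasks, which become `r` on task `n+1` (index `n`) and `a^{-(j-1)}` on task `n+j`
(index `n+j-1`) for `j = 2,…,n-1`. -/
noncomputable def A1 (n : ℕ) (r a : ℝ) : Fin n → Fin (2 * n - 1) → ℝ≥0∞ := fun i j =>
  if (i : ℕ) = 0 ∧ n ≤ (j : ℕ) then
    (if (j : ℕ) = n then ENNReal.ofReal r else ENNReal.ofReal (a⁻¹ ^ ((j : ℕ) - n)))
  else A0 n a i j

/-!
Let `j₀ > n` be the first proper task (0-based) that machine `0` does not get on `A1`; it costs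
`b = a⁻¹ ^ (j₀ - n)` to machine `0` and `a * b` to every other machine that can process it.
Machine `0` raises its cost on `j₀` to `b + ε` and drops its costs on its other proper tasks
to `0`; by weak monotonicity it still does not get `j₀`, which therefore goes to some machine
`i ≠ 0` at cost `a * b`. Machine `i` then lowers its cost on `j₀` to `a * b - ε` and raises the
cost of its dummy task from `0` to `b`. By weak monotonicity it keeps `j₀`, and it keeps the
dummy task, which costs `∞` to everybody else: its load is `(1 + a) * b - ε`. Yet giving the
later proper tasks (which are cheaper than `b`) to their own machines has makespan `b + ε`.
-/

namespace Alloc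

variable {n m : ℕ}

def ofFun (f : Fin m → Fin n) : Alloc n m where
  assign i j := decide (f j = i)
  feasible j := ⟨f j, by simp, fun _ hi => (of_decide_eq_true hi).symm⟩

@[simp]
lemma ofFun_assign (f : Fin m → Fin n) (i : Fin n) (j : Fin m) :
    (ofFun f).assign i j = decide (f j = i) :=
  rfl

end Alloc

theorem ENNReal.sum_lt_sum_of_le_of_lt {ι : Type*} {s : Finset ι} {f g : ι → ℝ≥0∞} {i₀ : ι}
    (hi₀ : i₀ ∈ s) (hg : ∑ i ∈ s, g i ≠ ⊤) (hle : ∀ i ∈ s, f i ≤ g i) (hlt : f i₀ < g i₀) :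
    ∑ i ∈ s, f i < ∑ i ∈ s, g i := by
  classical
  rw [← Finset.add_sum_erase s f hi₀, ← Finset.add_sum_erase s g hi₀]
  have hle' : ∑ i ∈ s.erase i₀, f i ≤ ∑ i ∈ s.erase i₀, g i :=
    Finset.sum_le_sum fun i hi => hle i (Finset.mem_of_mem_erase hi)
  have hg' : ∑ i ∈ s.erase i₀, g i ≠ ⊤ :=
    ne_top_of_le_ne_top hg (Finset.sum_le_sum_of_subset (Finset.erase_subset i₀ s))
  exact ENNReal.add_lt_add_of_lt_of_le (ne_top_of_le_ne_top hg' hle') hlt hle'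

theorem EReal.coe_sub_coe_ennreal_of_ne_top (p : ℝ) {x : ℝ≥0∞} (hx : x ≠ ⊤) :
    (p : EReal) - x = ((p - x.toReal : ℝ) : EReal) := by
  rw [← EReal.coe_ennreal_toReal hx, EReal.coe_sub]

lemma inv_pow_sub_one {a : ℝ} (ha : a ≠ 0) {k : ℕ} (hk : 1 ≤ k) :
    a⁻¹ ^ (k - 1) = a * a⁻¹ ^ k := by
  obtain ⟨k, rfl⟩ := Nat.exists_eq_add_of_le' hk
  rw [Nat.add_sub_cancel, pow_succ, mul_left_comm, mul_inv_cancel₀ ha, mul_one]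

lemma le_of_forall_pos_sub_le_mul_add {x ρ b : ℝ} (hb : 0 < b) (hρ : 0 ≤ ρ)
    (h : ∀ ε > 0, x * b - ε ≤ ρ * (b + ε)) : x ≤ ρ := by
  refine le_of_mul_le_mul_right (le_of_forall_pos_le_add fun δ hδ => ?_) hb
  have hε : ρ * (δ / (ρ + 1)) + δ / (ρ + 1) = δ := by field_simp
  linarith [h (δ / (ρ + 1)) (by positivity), mul_add ρ b (δ / (ρ + 1))]

section Makespan

variable {n m : ℕ}

lemma le_machineCost {A : Alloc n m} {ti : Fin m → ℝ≥0∞} {i : Fin n} {j : Fin m}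
    (h : A.assign i j = true) : ti j ≤ machineCost A ti i := by
  simpa [machineCost, h] using Finset.single_le_sum (f := fun j => if A.assign i j then ti j else 0)
    (fun _ _ => zero_le) (Finset.mem_univ j)

lemma add_le_machineCost {A : Alloc n m} {ti : Fin m → ℝ≥0∞} {i : Fin n} {j j' : Fin m}
    (hne : j ≠ j') (h : A.assign i j = true) (h' : A.assign i j' = true) :
    ti j + ti j' ≤ machineCost A ti i := by
  simpa [machineCost, Finset.sum_pair hne, h, h'] using Finset.sum_le_sum_of_subset
    (f := fun j => if A.assign i j then ti j else 0) (Finset.subset_univ {j, j'})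

lemma machineCost_le_makespan (A : Alloc n m) (t : Fin n → Fin m → ℝ≥0∞) (i : Fin n) :
    machineCost A (t i) i ≤ makespan A t :=
  le_iSup (fun i => machineCost A (t i) i) i

lemma makespan_eq_top_of_assign {A : Alloc n m} {t : Fin n → Fin m → ℝ≥0∞} {i : Fin n}
    {j : Fin m} (h : A.assign i j = true) (htop : t i j = ⊤) : makespan A t = ⊤ :=
  top_le_iff.mp (htop ▸ (le_machineCost h).trans (machineCost_le_makespan A t i))

lemma Alloc.assign_of_forall_ne_eq_top {A : Alloc n m} {t : Fin n → Fin m → ℝ≥0∞}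
    (hfin : makespan A t ≠ ⊤) {i : Fin n} {j : Fin m} (hcol : ∀ i', i' ≠ i → t i' j = ⊤) :
    A.assign i j = true := by
  obtain ⟨i', hi', -⟩ := A.feasible j
  by_cases h : i' = i
  · exact h ▸ hi'
  · exact absurd (makespan_eq_top_of_assign hi' (hcol i' h)) hfin

lemma makespan_ofFun_le_sum (f : Fin m → Fin n) (t : Fin n → Fin m → ℝ≥0∞) :
    makespan (Alloc.ofFun f) t ≤ ∑ j, t (f j) j :=
  iSup_le fun i => Finset.sum_le_sum fun j _ => by
    by_cases h : f j = i
    · subst h; simp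
    · simp [h]

lemma makespan_ofFun_ne_top {f : Fin m → Fin n} {t : Fin n → Fin m → ℝ≥0∞}
    (h : ∀ j, t (f j) j ≠ ⊤) : makespan (Alloc.ofFun f) t ≠ ⊤ :=
  ne_top_of_le_ne_top (ENNReal.sum_ne_top.2 fun j _ => h j) (makespan_ofFun_le_sum f t)

/-- Every machine `i` has at most one task of positive cost, `J i`, and it costs at most `B`. -/
lemma makespan_ofFun_le {f : Fin m → Fin n} {t : Fin n → Fin m → ℝ≥0∞} (J : Fin n → Fin m)
    {B : ℝ≥0∞} (h : ∀ j, t (f j) j ≤ if j = J (f j) then B else 0) :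
    makespan (Alloc.ofFun f) t ≤ B :=
  iSup_le fun i => calc
    machineCost (Alloc.ofFun f) (t i) i ≤ ∑ j, if j = J i then B else 0 :=
      Finset.sum_le_sum fun j _ => by
        by_cases hj : f j = i
        · subst hj; simpa using h j
        · simp [hj]
    _ = B := by simp

end Makespan

section Mechanism

variable {n m : ℕ} {M : Mechanism n m}

lemma ApproxRatioLE.makespan_le {ρ : ℝ} (hρ : ApproxRatioLE M ρ) (t : Fin n → Fin m → ℝ≥0∞)
    (A : Alloc n m) : makespan (M.alloc t) t ≤ ENNReal.ofReal ρ * makespan A t :=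
  (hρ.2 t).trans (mul_le_mul_right (iInf_le _ A) _)

lemma ApproxRatioLE.makespan_ne_top {ρ : ℝ} (hρ : ApproxRatioLE M ρ)
    {t : Fin n → Fin m → ℝ≥0∞} {A : Alloc n m} (h : makespan A t ≠ ⊤) :
    makespan (M.alloc t) t ≠ ⊤ :=
  ne_top_of_le_ne_top (ENNReal.mul_ne_top ENNReal.ofReal_ne_top h) (hρ.makespan_le t A)

/-- Weak monotonicity: adding up the truthfulness constraints between the two matrices cancels
the payments. -/
lemma Truthful.machineCost_add_le (hM : Truthful M) (t : Fin n → Fin m → ℝ≥0∞) (i : Fin n)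
    (s : Fin m → ℝ≥0∞) :
    machineCost (M.alloc t) (t i) i + machineCost (M.alloc (Function.update t i s)) s i ≤
      machineCost (M.alloc (Function.update t i s)) (t i) i + machineCost (M.alloc t) s i := by
  have h1 := hM t i s
  have h2 := hM (Function.update t i s) i (t i)
  rw [Function.update_idem, Function.update_eq_self, Function.update_self] at h2
  simp only [utility] at h1 h2
  generalize machineCost (M.alloc t) (t i) i = C, machineCost (M.alloc t) s i = D,
    machineCost (M.alloc (Function.update t i s)) (t i) i = C',
    machineCost (M.alloc (Function.update t i s)) s i = D' at h1 h2 ⊢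
  rcases eq_or_ne C' ⊤ with h | hC'; · simp [h]
  rcases eq_or_ne D ⊤ with h | hD; · simp [h]
  rw [EReal.coe_sub_coe_ennreal_of_ne_top _ hC'] at h1
  rw [EReal.coe_sub_coe_ennreal_of_ne_top _ hD] at h2
  have hC : C ≠ ⊤ := by
    rintro rfl; exact EReal.coe_ne_bot _ (le_bot_iff.mp (h1.trans_eq (by simp)))
  have hD' : D' ≠ ⊤ := by
    rintro rfl; exact EReal.coe_ne_bot _ (le_bot_iff.mp (h2.trans_eq (by simp)))
  rw [EReal.coe_sub_coe_ennreal_of_ne_top _ hC, EReal.coe_le_coe_iff] at h1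
  rw [EReal.coe_sub_coe_ennreal_of_ne_top _ hD', EReal.coe_le_coe_iff] at h2
  rw [← ENNReal.toReal_le_toReal (by finiteness) (by finiteness), ENNReal.toReal_add hC hD',
    ENNReal.toReal_add hC' hD]
  linarith

lemma Truthful.assign_update_eq_false (hM : Truthful M) {t : Fin n → Fin m → ℝ≥0∞} {i : Fin n}
    {s : Fin m → ℝ≥0∞} {j₀ : Fin m} (hj₀ : (M.alloc t).assign i j₀ = false)
    (hraise : t i j₀ < s j₀) (hle : ∀ j ≠ j₀, s j ≤ t i j)
    (heq : ∀ j ≠ j₀, (M.alloc t).assign i j = false → s j = t i j)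
    (hfin : machineCost (M.alloc t) (t i) i ≠ ⊤)
    (hfin' : machineCost (M.alloc (Function.update t i s)) s i ≠ ⊤) :
    (M.alloc (Function.update t i s)).assign i j₀ = false := by
  set x := (M.alloc t).assign i
  set x' := (M.alloc (Function.update t i s)).assign i
  by_contra h
  rw [Bool.not_eq_false] at h
  have hpointwise : ∀ j ∈ Finset.univ, (if x' j then t i j else 0) + (if x j then s j else 0) ≤
      (if x j then t i j else 0) + (if x' j then s j else 0) := by
    intro j _
    by_cases hj : j = j₀
    · simp [hj, hj₀, h, hraise.le]
    cases hxj : x j <;> cases x' j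
    · simp
    · simp [heq j hj hxj]
    · simp [hle j hj]
    · simp
  have hlt := ENNReal.sum_lt_sum_of_le_of_lt (Finset.mem_univ j₀)
    (by simpa [Finset.sum_add_distrib, machineCost] using ENNReal.add_ne_top.2 ⟨hfin, hfin'⟩)
    hpointwise (by simpa [hj₀, h] using hraise)
  simp only [Finset.sum_add_distrib] at hlt
  exact (hM.machineCost_add_le t i s).not_gt hlt

lemma Truthful.assign_update_of_lower (hM : Truthful M) {t : Fin n → Fin m → ℝ≥0∞} {i : Fin n}
    {s : Fin m → ℝ≥0∞} {j₀ : Fin m} (hj₀ : (M.alloc t).assign i j₀ = true)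
    (hlower : s j₀ < t i j₀) (hle : ∀ j ≠ j₀, t i j ≤ s j)
    (heq : ∀ j ≠ j₀, (M.alloc (Function.update t i s)).assign i j = false → t i j = s j)
    (hfin : machineCost (M.alloc t) (t i) i ≠ ⊤)
    (hfin' : machineCost (M.alloc (Function.update t i s)) s i ≠ ⊤) :
    (M.alloc (Function.update t i s)).assign i j₀ = true := by
  by_contra h
  have hback : Function.update (Function.update t i s) i (t i) = t := by simp
  have := hM.assign_update_eq_false (Bool.not_eq_true _ ▸ h) (by simpa using hlower)
    (by simpa using hle) (by simpa using heq) (by simpa using hfin') (by simpa [hback] using hfin)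
  simp [hback, hj₀] at this

end Mechanism

structure IsFirstUnassigned {n : ℕ} (held : Fin (2 * n - 1) → Bool) (j₀ : Fin (2 * n - 1)) :
    Prop where
  lt : n < (j₀ : ℕ)
  not_held : held j₀ = false
  held_of_lt : ∀ j : Fin (2 * n - 1), n ≤ (j : ℕ) → j < j₀ → held j = true

lemma exists_isFirstUnassigned {n : ℕ} {held : Fin (2 * n - 1) → Bool} (hn : n < 2 * n - 1)
    (hfirst : held ⟨n, hn⟩ = true)
    (hnotall : ∃ j : Fin (2 * n - 1), n + 1 ≤ (j : ℕ) ∧ held j = false) :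
    ∃ j₀, IsFirstUnassigned held j₀ := by
  obtain ⟨j₀, ⟨hj₀n, hj₀⟩, hmin⟩ := WellFounded.has_min wellFounded_lt
    {j : Fin (2 * n - 1) | n + 1 ≤ (j : ℕ) ∧ held j = false} hnotall
  refine ⟨j₀, hj₀n, hj₀, fun j hjn hj => ?_⟩
  rcases hjn.eq_or_lt with h | h
  · exact (Fin.ext h.symm : j = ⟨n, hn⟩) ▸ hfirst
  · by_contra h'
    exact hmin j ⟨h, by simpa using h'⟩ hj

lemma IsFirstUnassigned.lt_of_not_held {n : ℕ} {held : Fin (2 * n - 1) → Bool}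
    {j₀ : Fin (2 * n - 1)} (hj₀ : IsFirstUnassigned held j₀) {j : Fin (2 * n - 1)}
    (hjn : n ≤ (j : ℕ)) (hj : held j = false) (hne : j ≠ j₀) : (j₀ : ℕ) < j :=
  lt_of_le_of_ne (not_lt.1 fun h => by simpa [hj] using hj₀.held_of_lt j hjn h)
    (fun h => hne (Fin.ext h.symm))

section CostMatrix

variable {n : ℕ} {r a : ℝ} {i : Fin n} {j : Fin (2 * n - 1)}

def dummyTask (i : Fin n) : Fin (2 * n - 1) :=
  Fin.castLE (by omega) i

@[simp]
lemma val_dummyTask (i : Fin n) : (dummyTask i : ℕ) = i :=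
  rfl

lemma dummyTask_ne (hj : n ≤ (j : ℕ)) : dummyTask i ≠ j :=
  Fin.ne_of_val_ne (by simp; omega)

lemma A1_of_lt (hj : (j : ℕ) < n) : A1 n r a i j = if (j : ℕ) = i then 0 else ⊤ := by
  simp [A1, A0, hj, show ¬n ≤ (j : ℕ) by omega]

@[simp]
lemma A1_dummyTask_self : A1 n r a i (dummyTask i) = 0 := by
  simp [A1_of_lt (j := dummyTask i) (by simp)]

lemma A1_ne_top_of_val_eq_zero (hi : (i : ℕ) = 0) (hj : n ≤ (j : ℕ)) : A1 n r a i j ≠ ⊤ := by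
  simp only [A1, hi, hj, and_self, if_true]
  split_ifs <;> simp

lemma A1_of_val_eq_zero (hi : (i : ℕ) = 0) (hj : n < (j : ℕ)) :
    A1 n r a i j = ENNReal.ofReal (a⁻¹ ^ ((j : ℕ) - n)) := by
  simp [A1, hi, hj.le, hj.ne']

lemma A1_of_val_ne_zero (hi : (i : ℕ) ≠ 0) (hj : n < (j : ℕ)) (htop : A1 n r a i j ≠ ⊤) :
    A1 n r a i j = ENNReal.ofReal (a⁻¹ ^ ((j : ℕ) - n - 1)) := by
  simp only [A1, A0, hi, false_and, if_false, show ¬(j : ℕ) < n by omega, hj.ne'] at htop ⊢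
  split_ifs at htop ⊢ <;> simp_all

lemma A1_eq_top (hi : 2 ≤ (i : ℕ)) (hj : n ≤ (j : ℕ)) (hne : (j : ℕ) ≠ n + i - 1) :
    A1 n r a i j = ⊤ := by
  simp [A1, A0, show (i : ℕ) ≠ 0 by omega, show ¬(j : ℕ) < n by omega,
    show ¬(i : ℕ) ≤ 1 by omega, hne]

lemma A1_ne_top (hi : 2 ≤ (i : ℕ)) (hj : (j : ℕ) = n + i - 1) : A1 n r a i j ≠ ⊤ := by
  simp [A1, A0, show (i : ℕ) ≠ 0 by omega, show ¬n + i - 1 < n by omega,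
    show ¬(i : ℕ) ≤ 1 by omega, hj]

lemma sub_add_one_ne_of_A1_ne_top {j₀ : Fin (2 * n - 1)} (htop : A1 n r a i j₀ ≠ ⊤)
    (hj₀ : n ≤ (j₀ : ℕ)) (hj : n < (j : ℕ)) (hne : j ≠ j₀) :
    (j : ℕ) - n + 1 ≠ i := fun h =>
  htop (A1_eq_top (by omega) hj₀ fun h' => hne (Fin.ext (by omega)))

noncomputable def secondDeviationRow (t : Fin n → Fin (2 * n - 1) → ℝ≥0∞) (i : Fin n)
    (j₀ : Fin (2 * n - 1)) (b z : ℝ) : Fin (2 * n - 1) → ℝ≥0∞ :=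
  Function.update (Function.update (t i) (dummyTask i) (ENNReal.ofReal b)) j₀ (ENNReal.ofReal z)

noncomputable def secondDeviation (t : Fin n → Fin (2 * n - 1) → ℝ≥0∞) (i : Fin n)
    (j₀ : Fin (2 * n - 1)) (b z : ℝ) : Fin n → Fin (2 * n - 1) → ℝ≥0∞ :=
  Function.update t i (secondDeviationRow t i j₀ b z)

section SecondDeviation

variable {t : Fin n → Fin (2 * n - 1) → ℝ≥0∞} {j₀ : Fin (2 * n - 1)} {b z : ℝ}

lemma secondDeviation_self : secondDeviation t i j₀ b z i = secondDeviationRow t i j₀ b z :=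
  Function.update_self _ _ _

lemma secondDeviation_of_ne {i' : Fin n} (hi' : i' ≠ i) : secondDeviation t i j₀ b z i' = t i' :=
  Function.update_of_ne hi' _ _

lemma secondDeviationRow_of_ne (hj : j ≠ j₀) (hjd : j ≠ dummyTask i) :
    secondDeviationRow t i j₀ b z j = t i j := by
  simp [secondDeviationRow, hj, hjd]

lemma secondDeviationRow_dummyTask (hj₀ : n ≤ (j₀ : ℕ)) :
    secondDeviationRow t i j₀ b z (dummyTask i) = ENNReal.ofReal b := by
  simp [secondDeviationRow, dummyTask_ne hj₀]

lemma secondDeviationRow_self : secondDeviationRow t i j₀ b z j₀ = ENNReal.ofReal z := by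
  simp [secondDeviationRow]

/-- Machine `i` lowers its cost on `j₀` and raises its cost only on its dummy task, which it
keeps because everybody else has cost `∞` on it. -/
lemma Truthful.secondDeviation_assign {M : Mechanism n (2 * n - 1)} (hM : Truthful M)
    (hiu : (M.alloc t).assign i j₀ = true) (hz : ENNReal.ofReal z < t i j₀)
    (hud : t i (dummyTask i) = 0) (hcol : ∀ i' ≠ i, t i' (dummyTask i) = ⊤)
    (hfin : makespan (M.alloc t) t ≠ ⊤)
    (hfin' : makespan (M.alloc (secondDeviation t i j₀ b z)) (secondDeviation t i j₀ b z) ≠ ⊤) :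
    (M.alloc (secondDeviation t i j₀ b z)).assign i (dummyTask i) = true ∧
      (M.alloc (secondDeviation t i j₀ b z)).assign i j₀ = true := by
  have hd := Alloc.assign_of_forall_ne_eq_top hfin' (j := dummyTask i) fun i' hi' => by
    rw [secondDeviation_of_ne hi', hcol i' hi']
  refine ⟨hd, hM.assign_update_of_lower (s := secondDeviationRow t i j₀ b z) hiu
    (by rwa [secondDeviationRow_self]) (fun j hj => ?_) (fun j hj hj' => ?_)
    (ne_top_of_le_ne_top hfin (machineCost_le_makespan _ _ _)) (ne_top_of_le_ne_top hfin' ?_)⟩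
  · rcases eq_or_ne j (dummyTask i) with rfl | hjd
    · simp [hud]
    · exact (secondDeviationRow_of_ne hj hjd).ge
  · have hjd : j ≠ dummyTask i := by
      rintro rfl; exact absurd (hj'.symm.trans hd) Bool.false_ne_true
    exact (secondDeviationRow_of_ne hj hjd).symm
  · have h := machineCost_le_makespan (M.alloc (secondDeviation t i j₀ b z))
      (secondDeviation t i j₀ b z) i
    rw [secondDeviation_self] at h
    exact h

end SecondDeviation

end CostMatrix

section CaseTwo

variable {n : ℕ} [NeZero n] {r a ρ : ℝ} {M : Mechanism n (2 * n - 1)}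
  {held : Fin (2 * n - 1) → Bool} {j₀ : Fin (2 * n - 1)} {y : ℝ} {i : Fin n}
  {j : Fin (2 * n - 1)}

noncomputable def firstDeviation (n : ℕ) [NeZero n] (r a : ℝ) (held : Fin (2 * n - 1) → Bool)
    (j₀ : Fin (2 * n - 1)) (y : ℝ) : Fin n → Fin (2 * n - 1) → ℝ≥0∞ :=
  Function.update (A1 n r a) 0 <| Function.update
    (fun j => if n ≤ (j : ℕ) ∧ held j = true then 0 else A1 n r a 0 j) j₀ (ENNReal.ofReal y)

lemma firstDeviation_of_ne (hi : i ≠ 0) : firstDeviation n r a held j₀ y i = A1 n r a i :=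
  Function.update_of_ne hi _ _

lemma firstDeviation_of_lt (hj₀ : n < (j₀ : ℕ)) (hj : (j : ℕ) < n) :
    firstDeviation n r a held j₀ y i j = A1 n r a i j := by
  rcases eq_or_ne i 0 with rfl | hi
  · simp [firstDeviation, Fin.ne_of_val_ne (show (j : ℕ) ≠ j₀ by omega), hj.not_ge]
  · rw [firstDeviation_of_ne hi]

lemma firstDeviation_dummyTask_of_ne (hj₀ : n < (j₀ : ℕ)) {i' : Fin n} (hi' : i' ≠ i) :
    firstDeviation n r a held j₀ y i' (dummyTask i) = ⊤ := by
  rw [firstDeviation_of_lt hj₀ (by simp), A1_of_lt (by simp)]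
  simp [Fin.val_ne_iff.2 hi'.symm]

lemma firstDeviation_zero_ne_top (hj : n ≤ (j : ℕ)) : firstDeviation n r a held j₀ y 0 j ≠ ⊤ := by
  simp only [firstDeviation, Function.update_self, Function.update_apply]
  split_ifs
  exacts [ENNReal.ofReal_ne_top, ENNReal.zero_ne_top, A1_ne_top_of_val_eq_zero rfl hj]

lemma ApproxRatioLE.makespan_ne_top_of_row_zero_ne_top (hρ : ApproxRatioLE M ρ)
    {t : Fin n → Fin (2 * n - 1) → ℝ≥0∞}
    (hdummy : ∀ (j : Fin (2 * n - 1)) (hj : (j : ℕ) < n), t ⟨j, hj⟩ j ≠ ⊤)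
    (hproper : ∀ j : Fin (2 * n - 1), n ≤ (j : ℕ) → t 0 j ≠ ⊤) :
    makespan (M.alloc t) t ≠ ⊤ :=
  hρ.makespan_ne_top (makespan_ofFun_ne_top
    (f := fun j => if h : (j : ℕ) < n then ⟨j, h⟩ else 0) fun j => by
      by_cases h : (j : ℕ) < n
      · simpa [h] using hdummy j h
      · simpa [h] using hproper j (by omega))

lemma ApproxRatioLE.makespan_A1_ne_top (hρ : ApproxRatioLE M ρ) :
    makespan (M.alloc (A1 n r a)) (A1 n r a) ≠ ⊤ :=
  hρ.makespan_ne_top_of_row_zero_ne_top (fun j hj => by simp [A1_of_lt hj])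
    fun _ hj => A1_ne_top_of_val_eq_zero rfl hj

lemma ApproxRatioLE.makespan_firstDeviation_ne_top (hρ : ApproxRatioLE M ρ)
    (hj₀ : n < (j₀ : ℕ)) :
    makespan (M.alloc (firstDeviation n r a held j₀ y)) (firstDeviation n r a held j₀ y) ≠ ⊤ :=
  hρ.makespan_ne_top_of_row_zero_ne_top
    (fun j hj => by simp [firstDeviation_of_lt hj₀ hj, A1_of_lt hj])
    fun _ hj => firstDeviation_zero_ne_top hj

/-- Machine `0` only raised its cost on `j₀` and lowered its costs on tasks it got. -/
lemma Truthful.firstDeviation_assign_zero_eq_false (hM : Truthful M) (hρ : ApproxRatioLE M ρ)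
    (ha : 0 < a) (hj₀ : IsFirstUnassigned ((M.alloc (A1 n r a)).assign 0) j₀)
    (hy : a⁻¹ ^ ((j₀ : ℕ) - n) < y) :
    (M.alloc (firstDeviation n r a ((M.alloc (A1 n r a)).assign 0) j₀ y)).assign 0 j₀ =
      false := by
  refine hM.assign_update_eq_false hj₀.not_held ?_ (fun j hj => ?_) (fun j hj hheld => ?_)
    (ne_top_of_le_ne_top hρ.makespan_A1_ne_top (machineCost_le_makespan _ _ _))
    (ne_top_of_le_ne_top (hρ.makespan_firstDeviation_ne_top hj₀.lt)
      (machineCost_le_makespan _ _ 0))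
  · simpa [A1_of_val_eq_zero (i := 0) rfl hj₀.lt, ENNReal.ofReal_lt_ofReal_iff_of_nonneg, ha.le]
      using hy
  · simp only [Function.update_of_ne hj]
    split_ifs <;> simp
  · simp [Function.update_of_ne hj, hheld]

lemma Truthful.exists_assign_firstDeviation (hM : Truthful M) (hρ : ApproxRatioLE M ρ)
    (ha : 0 < a) (hj₀ : IsFirstUnassigned ((M.alloc (A1 n r a)).assign 0) j₀)
    (hy : a⁻¹ ^ ((j₀ : ℕ) - n) < y) :
    ∃ i ≠ 0, (M.alloc (firstDeviation n r a ((M.alloc (A1 n r a)).assign 0) j₀ y)).assign i j₀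
      = true ∧ A1 n r a i j₀ ≠ ⊤ := by
  obtain ⟨i, hi, -⟩ :=
    (M.alloc (firstDeviation n r a ((M.alloc (A1 n r a)).assign 0) j₀ y)).feasible j₀
  have hi0 : i ≠ 0 := by
    rintro rfl
    simp [hM.firstDeviation_assign_zero_eq_false hρ ha hj₀ hy] at hi
  exact ⟨i, hi0, hi, fun htop => hρ.makespan_firstDeviation_ne_top hj₀.lt
    (makespan_eq_top_of_assign hi (by rwa [firstDeviation_of_ne hi0]))⟩

/-- Every proper task `j` not handled by machine `0` goes to machine `j - n + 1`, the only
machine besides `0` and `1` with a finite cost on it. -/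
def benchmark (held : Fin (2 * n - 1) → Bool) (j₀ : Fin (2 * n - 1)) : Fin (2 * n - 1) → Fin n :=
  fun j => if h : (j : ℕ) < n then ⟨j, h⟩
    else if j = j₀ ∨ held j = true then 0
    else ⟨(j : ℕ) - n + 1, by omega⟩

lemma A1_benchmark_le (ha : 1 < a) (hj₀ : IsFirstUnassigned held j₀) (hjn : ¬(j : ℕ) < n)
    (hj : ¬(j = j₀ ∨ held j = true)) :
    A1 n r a (benchmark held j₀ j) j ≤ ENNReal.ofReal (a⁻¹ ^ ((j₀ : ℕ) - n)) := by
  push Not at hj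
  have hj₀j := hj₀.lt_of_not_held (not_lt.1 hjn) (by simpa using hj.2) hj.1
  have := hj₀.lt
  simp only [benchmark, dif_neg hjn, hj.1, hj.2, false_or]
  rw [A1_of_val_ne_zero (by simp) (by omega) (A1_ne_top (by simp; omega) (by simp; omega))]
  exact ENNReal.ofReal_le_ofReal
    (pow_le_pow_of_le_one (by positivity) (inv_le_one_of_one_le₀ ha.le) (by omega))

lemma makespan_benchmark_le (ha : 1 < a) (hj₀ : IsFirstUnassigned held j₀) (hi : i ≠ 0)
    (htop : A1 n r a i j₀ ≠ ⊤) {b z : ℝ} (hb : b ≤ y) (hy : a⁻¹ ^ ((j₀ : ℕ) - n) ≤ y) :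
    makespan (Alloc.ofFun (benchmark held j₀))
      (secondDeviation (firstDeviation n r a held j₀ y) i j₀ b z) ≤ ENNReal.ofReal y := by
  refine makespan_ofFun_le (fun k => if k = 0 then j₀ else if k = i then dummyTask i
    else ⟨n + k - 1, by omega⟩) fun j => ?_
  by_cases hjn : (j : ℕ) < n
  · have hf : benchmark held j₀ j = ⟨j, hjn⟩ := dif_pos hjn
    by_cases hji : (⟨j, hjn⟩ : Fin n) = i
    · obtain rfl : j = dummyTask i := Fin.ext (by simp [← hji])
      rw [hf, hji, secondDeviation_self, secondDeviationRow_dummyTask hj₀.lt.le]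
      simp [hi, ENNReal.ofReal_le_ofReal hb]
    · simp [hf, secondDeviation_of_ne hji, firstDeviation_of_lt hj₀.lt hjn, A1_of_lt hjn]
  by_cases hheld : j = j₀ ∨ held j = true
  · have hf : benchmark held j₀ j = 0 := by simp [benchmark, hjn, hheld]
    rw [hf, secondDeviation_of_ne hi.symm]
    rcases eq_or_ne j j₀ with rfl | hj
    · simp [firstDeviation]
    · simp [firstDeviation, hj, hheld.resolve_left hj, show n ≤ (j : ℕ) by omega]
  · set k : Fin n := ⟨(j : ℕ) - n + 1, by have := j.isLt; omega⟩ with hk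
    have hf : benchmark held j₀ j = k := by simp [benchmark, hjn, hheld, k]
    push Not at hheld
    have hj₀j := hj₀.lt_of_not_held (not_lt.1 hjn) (by simpa using hheld.2) hheld.1
    have hk0 : k ≠ 0 := Fin.ne_of_val_ne (by simp [hk])
    have hki : k ≠ i := fun h =>
      sub_add_one_ne_of_A1_ne_top htop hj₀.lt.le (hj₀.lt.trans hj₀j) hheld.1 (by rw [← h])
    have hJ : (⟨n + k - 1, by omega⟩ : Fin (2 * n - 1)) = j := Fin.ext (by simp [k]; omega)
    have hle := A1_benchmark_le (r := r) ha hj₀ hjn (by tauto)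
    rw [hf] at hle ⊢
    rw [secondDeviation_of_ne hki, firstDeviation_of_ne hk0]
    simpa [hk0, hki, hJ] using hle.trans (ENNReal.ofReal_le_ofReal hy)

/-- The machine `i` that gets `j₀` after the first deviation keeps `j₀` and its dummy task
in the second deviation, while the optimum stays at most `a⁻¹ ^ (j₀ - n) + ε`. -/
lemma Truthful.load_le_of_isFirstUnassigned (hM : Truthful M) (hρ : ApproxRatioLE M ρ)
    (ha : 1 < a) (hj₀ : IsFirstUnassigned ((M.alloc (A1 n r a)).assign 0) j₀) {ε : ℝ}
    (hε : 0 < ε) :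
    ENNReal.ofReal (a⁻¹ ^ ((j₀ : ℕ) - n)) + ENNReal.ofReal (a⁻¹ ^ ((j₀ : ℕ) - n - 1) - ε) ≤
      ENNReal.ofReal ρ * ENNReal.ofReal (a⁻¹ ^ ((j₀ : ℕ) - n) + ε) := by
  set b := a⁻¹ ^ ((j₀ : ℕ) - n)
  set c := a⁻¹ ^ ((j₀ : ℕ) - n - 1)
  set held := (M.alloc (A1 n r a)).assign 0
  obtain ⟨i, hi0, hiu, htop⟩ :=
    hM.exists_assign_firstDeviation hρ (by linarith) hj₀ (lt_add_of_pos_right b hε)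
  have hz : ENNReal.ofReal (c - ε) < firstDeviation n r a held j₀ (b + ε) i j₀ := by
    rw [firstDeviation_of_ne hi0, A1_of_val_ne_zero (Fin.val_ne_zero_iff.2 hi0) hj₀.lt htop,
      ENNReal.ofReal_lt_ofReal_iff (pow_pos (by positivity) _)]
    linarith
  have hud : firstDeviation n r a held j₀ (b + ε) i (dummyTask i) = 0 := by
    simp [firstDeviation_of_ne hi0]
  set u' := secondDeviation (firstDeviation n r a held j₀ (b + ε)) i j₀ b (c - ε)
  have hbound : makespan (M.alloc u') u' ≤ ENNReal.ofReal ρ * ENNReal.ofReal (b + ε) :=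
    (hρ.makespan_le u' _).trans (mul_le_mul_right (makespan_benchmark_le (b := b) (y := b + ε)
      ha hj₀ hi0 htop (by linarith) (by linarith)) _)
  obtain ⟨hd, hj₀'⟩ := hM.secondDeviation_assign hiu hz hud
    (fun i' hi' => firstDeviation_dummyTask_of_ne hj₀.lt hi')
    (hρ.makespan_firstDeviation_ne_top hj₀.lt) (ne_top_of_le_ne_top (by finiteness) hbound)
  calc ENNReal.ofReal b + ENNReal.ofReal (c - ε) = u' i (dummyTask i) + u' i j₀ := by
        rw [show u' i = _ from secondDeviation_self, secondDeviationRow_dummyTask hj₀.lt.le,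
          secondDeviationRow_self]
    _ ≤ machineCost (M.alloc u') (u' i) i := add_le_machineCost (dummyTask_ne hj₀.lt.le) hd hj₀'
    _ ≤ makespan (M.alloc u') u' := machineCost_le_makespan _ _ _
    _ ≤ _ := hbound

end CaseTwo

/-- **Case 2.**  Let `(a,p)` be a truthful mechanism with finite
approximation ratio `ρ`.  If, on cost matrix `A1`, the mechanism allocates the proper task
`n+1` (0-based index `n`) to machine `1` (index `0`) but does not allocate all of the
proper tasks `n+2,…,2n-1` (indices `n+1,…,2n-2`) to machine `1`, then `ρ ≥ 1 + a`. -/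
theorem case_two_lower_bound (n : ℕ) (hn : 3 ≤ n) (r a : ℝ)
    (ha : 1 < a)
    (M : Mechanism n (2 * n - 1)) (hM : Truthful M)
    (ρ : ℝ) (hρ : ApproxRatioLE M ρ)
    (hfirst : (M.alloc (A1 n r a)).assign ⟨0, by omega⟩ ⟨n, by omega⟩ = true)
    (hnotall : ∃ j : Fin (2 * n - 1), n + 1 ≤ (j : ℕ) ∧
      (M.alloc (A1 n r a)).assign ⟨0, by omega⟩ j = false) :
    1 + a ≤ ρ := by
  have : NeZero n := ⟨by omega⟩
  obtain ⟨j₀, hj₀⟩ := exists_isFirstUnassigned (by omega) hfirst hnotall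
  set b := a⁻¹ ^ ((j₀ : ℕ) - n)
  have hb : 0 < b := pow_pos (inv_pos.2 (by linarith)) _
  have hρ0 : 0 ≤ ρ := zero_le_one.trans hρ.1
  refine le_of_forall_pos_sub_le_mul_add hb hρ0 fun ε hε => ?_
  have hload := ENNReal.ofReal_add_le.trans (hM.load_le_of_isFirstUnassigned hρ ha hj₀ hε)
  rw [← ENNReal.ofReal_mul hρ0, ENNReal.ofReal_le_ofReal_iff (by positivity),
    inv_pow_sub_one (by linarith) (by have := hj₀.lt; omega)] at hload
  linarith
end

section
/- For each integer n ≥ 3, let a_{n,1} be the unique positive real solution of a = 2a^{-1} + ∑_{i=2}^{n-2} a^{-i}, and let a_{n,2} be the unique positive real solution of a = 1 − a^{-1} + a^{-(n-2)} + ∑_{i=1}^{n-2} a^{-i}. Then a_{n,1} < a_{n,2} for n ∈ {3,4,5}, and a_{n,2} < a_{n,1} for every n ≥ 6. -/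
/-!
Write `y = a⁻¹`. The two right-hand sides differ by `1 + y ^ (n - 2) - 2 * y`. If `F` is one of
them, `x - F x` is negative at `1`, so by the intermediate value theorem and uniqueness of the
positive fixed point, `F c < c` for some `c > 1` puts that fixed point below `c`. Hence the
comparison at `n` comes down to the sign of `1 + y ^ (n - 2) - 2 * y`, evaluated at the other root.
For `n ≤ 5` this is a direct polynomial check. For `n ≥ 6` the geometric bound
`∑_{i ≥ 2} y ^ i ≤ y ^ 2 / (1 - y)` turns the first equation into `y³ - 2y² - y + 1 ≤ 0`, which
puts `y` above the root of `y + y² + y³ = 1`, and then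
`1 + y ^ (n - 2) ≤ 1 + y ^ 4 < 2 * y` because `1 - 2y + y⁴ = (1 - y) (1 - y - y² - y³)`.
-/

open Finset

noncomputable def rhs₁ (n : ℕ) (b : ℝ) : ℝ := 2 * b⁻¹ + ∑ i ∈ Icc 2 (n - 2), b⁻¹ ^ i

noncomputable def rhs₂ (n : ℕ) (b : ℝ) : ℝ :=
  1 - b⁻¹ + b⁻¹ ^ (n - 2) + ∑ i ∈ Icc 1 (n - 2), b⁻¹ ^ i

lemma lt_of_unique_fixedPoint {F : ℝ → ℝ} {r c : ℝ} (hc : 1 ≤ c)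
    (hF : ContinuousOn F (Set.Icc 1 c)) (hF1 : 1 ≤ F 1) (hFc : F c < c)
    (huniq : ∀ b, 0 < b → b = F b → b = r) : r < c := by
  obtain ⟨b, ⟨hb1, hbc⟩, hb⟩ := intermediate_value_Icc hc (continuousOn_id.sub hF)
    ⟨sub_nonpos.mpr hF1, (sub_pos.mpr hFc).le⟩
  have hbF : b = F b := sub_eq_zero.mp hb
  obtain rfl := huniq b (by linarith) hbF
  exact hbc.lt_of_ne (by rintro rfl; linarith)

lemma continuousOn_rhs₁ (n : ℕ) : ContinuousOn (rhs₁ n) (Set.Ioi 0) := by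
  have hinv : ContinuousOn (·⁻¹) (Set.Ioi (0 : ℝ)) :=
    continuousOn_inv₀.mono fun x hx => ne_of_gt hx
  exact (continuousOn_const.mul hinv).add (continuousOn_finsetSum _ fun i _ => hinv.pow i)

lemma continuousOn_rhs₂ (n : ℕ) : ContinuousOn (rhs₂ n) (Set.Ioi 0) := by
  have hinv : ContinuousOn (·⁻¹) (Set.Ioi (0 : ℝ)) :=
    continuousOn_inv₀.mono fun x hx => ne_of_gt hx
  exact (((continuousOn_const.sub hinv).add (hinv.pow _)).add
    (continuousOn_finsetSum _ fun i _ => hinv.pow i))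

lemma one_le_rhs₁_one (n : ℕ) : 1 ≤ rhs₁ n 1 := by
  simp only [rhs₁, inv_one, one_pow, sum_const, nsmul_eq_mul, mul_one]
  linarith [(Nat.cast_nonneg _ : (0 : ℝ) ≤ #(Icc 2 (n - 2)))]

lemma one_le_rhs₂_one (n : ℕ) : 1 ≤ rhs₂ n 1 := by
  simp only [rhs₂, inv_one, one_pow, sum_const, nsmul_eq_mul, mul_one]
  linarith [(Nat.cast_nonneg _ : (0 : ℝ) ≤ #(Icc 1 (n - 2)))]

lemma rhs₂_eq_rhs₁_add {n : ℕ} (hn : 3 ≤ n) (b : ℝ) :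
    rhs₂ n b = rhs₁ n b + (1 + b⁻¹ ^ (n - 2) - 2 * b⁻¹) := by
  have hIcc : Icc 1 (n - 2) = insert 1 (Icc 2 (n - 2)) :=
    (insert_Icc_add_one_left_eq_Icc (by omega)).symm
  rw [rhs₂, rhs₁, hIcc, sum_insert (by simp)]
  ring

lemma sum_Icc_two_pow_mul_one_sub_le {y : ℝ} (hy : 0 ≤ y) (m : ℕ) :
    (∑ i ∈ Icc 2 m, y ^ i) * (1 - y) ≤ y ^ 2 := by
  rcases Nat.eq_zero_or_pos m with rfl | hm
  · simp [sq_nonneg]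
  · rw [← Ico_add_one_right_eq_Icc, geom_sum_Ico_mul_neg _ (by omega)]
    linarith [pow_nonneg hy (m + 1)]

lemma two_mul_inv_lt_of_eq_rhs₂ {n : ℕ} (hn : n = 3 ∨ n = 4 ∨ n = 5) {a : ℝ} (ha : 1 < a)
    (h : a = rhs₂ n a) : 2 * a⁻¹ < 1 + a⁻¹ ^ (n - 2) := by
  have hy0 : 0 < a⁻¹ := by positivity
  have hy1 : a⁻¹ < 1 := inv_lt_one_of_one_lt₀ ha
  have hay : a * a⁻¹ = 1 := mul_inv_cancel₀ (by positivity)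
  rcases hn with rfl | rfl | rfl
  · linarith
  · nlinarith [mul_pos (sub_pos.mpr hy1) (sub_pos.mpr hy1)]
  · norm_num [rhs₂, sum_Icc_succ_top] at h ⊢
    simp only [← inv_pow] at h ⊢
    generalize a⁻¹ = y at *
    have hrel : y + y ^ 3 + 2 * y ^ 4 = 1 := by linear_combination hay - y * h
    nlinarith [sq_nonneg (y - 0.6), sq_nonneg (y ^ 2 - 0.36), mul_pos hy0 hy0]

lemma cubic_le_zero_of_eq_rhs₁ {n : ℕ} {a : ℝ} (ha : 0 < a) (h : a = rhs₁ n a) :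
    a⁻¹ ^ 3 - 2 * a⁻¹ ^ 2 - a⁻¹ + 1 ≤ 0 := by
  have hy0 : 0 < a⁻¹ := by positivity
  have hay : a * a⁻¹ = 1 := mul_inv_cancel₀ (by positivity)
  have hS := sum_Icc_two_pow_mul_one_sub_le hy0.le (n - 2)
  rw [rhs₁] at h
  generalize a⁻¹ = y at *
  generalize ∑ i ∈ Icc 2 (n - 2), y ^ i = S at *
  have hrel : 2 * y ^ 2 + y * S = 1 := by linear_combination hay - y * h
  nlinarith [mul_le_mul_of_nonneg_left hS hy0.le]

lemma one_add_pow_lt_two_mul {y : ℝ} (hy0 : 0 < y) (hy1 : y < 1)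
    (hcubic : y ^ 3 - 2 * y ^ 2 - y + 1 ≤ 0) {k : ℕ} (hk : 4 ≤ k) : 1 + y ^ k < 2 * y := by
  have htrib : 1 < y + y ^ 2 + y ^ 3 := by
    nlinarith [sq_nonneg (y - 0.55), mul_pos hy0 hy0, sq_nonneg (y - 1)]
  have hk4 : y ^ k ≤ y ^ 4 := pow_le_pow_of_le_one hy0.le hy1.le hk
  nlinarith [mul_pos (sub_pos.mpr hy1) (sub_pos.mpr htrib)]

/-- For each `n ≥ 3`, let `a1 n` be the unique positive real solution of
`a = 2a⁻¹ + ∑_{i=2}^{n-2} a^{-i}`, and `a2 n` the unique positive real solution of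
`a = 1 - a⁻¹ + a^{-(n-2)} + ∑_{i=1}^{n-2} a^{-i}` (both lie in `(1,∞)`).  Then
`a1 n < a2 n` for `n ∈ {3,4,5}`, and `a2 n < a1 n` for every `n ≥ 6`. -/
theorem comparison_of_roots (a1 a2 : ℕ → ℝ)
    (h1gt : ∀ n, 3 ≤ n → 1 < a1 n)
    (h1eq : ∀ n, 3 ≤ n →
      a1 n = 2 * (a1 n)⁻¹ + ∑ i ∈ Finset.Icc 2 (n - 2), (a1 n)⁻¹ ^ i)
    (h1uniq : ∀ n, 3 ≤ n → ∀ b : ℝ, 0 < b →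
      b = 2 * b⁻¹ + ∑ i ∈ Finset.Icc 2 (n - 2), b⁻¹ ^ i → b = a1 n)
    (h2gt : ∀ n, 3 ≤ n → 1 < a2 n)
    (h2eq : ∀ n, 3 ≤ n →
      a2 n = 1 - (a2 n)⁻¹ + (a2 n)⁻¹ ^ (n - 2) + ∑ i ∈ Finset.Icc 1 (n - 2), (a2 n)⁻¹ ^ i)
    (h2uniq : ∀ n, 3 ≤ n → ∀ b : ℝ, 0 < b →
      b = 1 - b⁻¹ + b⁻¹ ^ (n - 2) + ∑ i ∈ Finset.Icc 1 (n - 2), b⁻¹ ^ i → b = a2 n) :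
    (∀ n, n = 3 ∨ n = 4 ∨ n = 5 → a1 n < a2 n) ∧
    (∀ n, 6 ≤ n → a2 n < a1 n) := by
  constructor
  · intro n hn
    have hn3 : 3 ≤ n := by omega
    have ha := h2gt n hn3
    have heq : a2 n = rhs₂ n (a2 n) := h2eq n hn3
    have hgap := two_mul_inv_lt_of_eq_rhs₂ hn ha heq
    refine lt_of_unique_fixedPoint ha.le
      ((continuousOn_rhs₁ n).mono ((Set.Icc_subset_Ioi_iff ha.le).2 one_pos))
      (one_le_rhs₁_one n) ?_ (h1uniq n hn3)
    linarith [rhs₂_eq_rhs₁_add hn3 (a2 n)]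
  · intro n hn
    have hn3 : 3 ≤ n := by omega
    have ha := h1gt n hn3
    have heq : a1 n = rhs₁ n (a1 n) := h1eq n hn3
    have hgap := one_add_pow_lt_two_mul (inv_pos.2 (by linarith)) (inv_lt_one_of_one_lt₀ ha)
      (cubic_le_zero_of_eq_rhs₁ (by linarith) heq) (by omega : 4 ≤ n - 2)
    refine lt_of_unique_fixedPoint ha.le
      ((continuousOn_rhs₂ n).mono ((Set.Icc_subset_Ioi_iff ha.le).2 one_pos))
      (one_le_rhs₂_one n) ?_ (h2uniq n hn3)
    linarith [rhs₂_eq_rhs₁_add hn3 (a1 n)]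
end
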